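/- Let V be a finite set with |V| = n ≥ 1, and let y : V → V → Bool be a relation such that: (i) every vertex has at most one outgoing edge and at most one incoming edge (Σ_w y v w ≤ 1 and Σ_v y v w ≤ 1 for all v, w); (ii) for every nonempty subset V' ⊆ V, the number of edges with both endpoints in V' is at most |V'| − 1; and (iii) the total number of edges is n − 1. Then the directed graph defined by y is a simple directed path (Hamiltonian path) on V. -/

import Mathlib

/-!
There are fewer arcs than vertices, so some vertex `s` has no incoming arc. Unless `s` is the only
vertex, the subtour bound for `V \ {s}` forces an arc `s → t`, and it is the only arc at `s`.
Deleting `s` therefore keeps all the constraints, and by induction the other vertices form a path.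
Its head is the unique vertex without an incoming arc there, which is `t` because `t` already has
its one incoming arc from `s`; prepending `s` gives the path on `V`.
-/

open Finset

section

variable {V : Type*}

def arcsOn (r : V → V → Prop) [DecidableRel r] (S : Finset V) : Finset (V × V) :=
  (S ×ˢ S).filter fun p => r p.1 p.2

/-- The constraints (13a)–(13c) on the relation `r v w := y v w = true`. -/
structure ChainConstraints [Fintype V] (r : V → V → Prop) [DecidableRel r] : Prop where
  out_unique : ∀ ⦃v w w'⦄, r v w → r v w' → w = w'
  in_unique : ∀ ⦃v v' w⦄, r v w → r v' w → v = v'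
  card_arcsOn_lt : ∀ S : Finset V, S.Nonempty → #(arcsOn r S) < #S
  card_arcs : #(arcsOn r univ) = Fintype.card V - 1

section Arcs

variable (r : V → V → Prop) [DecidableRel r]

theorem filter_mem_mem_rel_eq_arcsOn [Fintype V] [DecidableEq V] (S : Finset V) :
    univ.filter (fun p : V × V => p.1 ∈ S ∧ p.2 ∈ S ∧ r p.1 p.2) = arcsOn r S := by
  ext p
  simp [arcsOn, and_assoc]

theorem arcsOn_mono {S T : Finset V} (h : S ⊆ T) : arcsOn r S ⊆ arcsOn r T :=
  filter_subset_filter _ (product_subset_product h h)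

theorem card_arcsOn_comap {W : Type*} (f : W ↪ V) (S : Finset W) :
    #(arcsOn (fun a b => r (f a) (f b)) S) = #(arcsOn r (S.map f)) := by
  rw [← card_map (f.prodMap f)]
  congr 1
  ext ⟨v, w⟩
  simp only [arcsOn, mem_map, mem_filter, mem_product, Function.Embedding.coe_prodMap,
    Prod.exists, Prod.map_apply, Prod.mk.injEq]
  aesop

theorem exists_forall_not_rel_of_card_arcs_lt [Fintype V]
    (h : #(arcsOn r univ) < Fintype.card V) : ∃ s, ∀ v, ¬ r v s := by
  by_contra! hsurj
  refine h.not_ge (card_le_card_of_surjOn Prod.snd fun w _ => ?_)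
  obtain ⟨v, hv⟩ := hsurj w
  exact ⟨(v, w), by simp [arcsOn, hv], rfl⟩

theorem arcsOn_univ_eq_insert [Fintype V] [DecidableEq V] {s t : V}
    (hs : ∀ v, ¬ r v s) (hout : ∀ w, r s w → w = t) (hst : r s t) :
    arcsOn r univ = insert (s, t) (arcsOn r (univ.erase s)) := by
  ext ⟨v, w⟩
  simp only [arcsOn, mem_insert, mem_filter, mem_product, mem_univ, mem_erase, Prod.mk.injEq]
  by_cases hv : v = s
  · subst hv
    grind
  · grind

end Arcs

theorem rel_iff_exists_of_rel_apply_iff {r : V → V → Prop} {n : ℕ} (e : Fin n ≃ V)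
    (he : ∀ i j, r (e i) (e j) ↔ j.val = i.val + 1) (v w : V) :
    r v w ↔ ∃ (i : Fin n) (h : i.val + 1 < n), e i = v ∧ e ⟨i.val + 1, h⟩ = w := by
  constructor
  · intro hvw
    have hj := (he (e.symm v) (e.symm w)).1 (by simpa using hvw)
    refine ⟨e.symm v, hj ▸ (e.symm w).isLt, by simp, ?_⟩
    simp [← hj]
  · rintro ⟨i, h, rfl, rfl⟩
    exact (he _ _).2 rfl

def consEquiv [DecidableEq V] (s : V) {m : ℕ} (e : Fin m ≃ {v // v ≠ s}) :
    Fin (m + 1) ≃ V :=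
  (finSuccEquiv m).trans (e.optionCongr.trans (Equiv.optionSubtypeNe s))

theorem consEquiv_rel_apply_iff [DecidableEq V] {r : V → V → Prop} {s : V}
    (hs : ∀ v, ¬ r v s) {m : ℕ} (e : Fin m ≃ {v // v ≠ s})
    (he : ∀ i j, r (e i) (e j) ↔ j.val = i.val + 1)
    (hhead : ∀ j, r s (e j) ↔ j.val = 0) (i j : Fin (m + 1)) :
    r (consEquiv s e i) (consEquiv s e j) ↔ j.val = i.val + 1 := by
  cases i using Fin.cases <;> cases j using Fin.cases <;> simp [consEquiv, hs, he, hhead]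

namespace ChainConstraints

variable [Fintype V] {r : V → V → Prop} [DecidableRel r]

theorem of_card_filter [DecidableEq V]
    (hout : ∀ v, #(univ.filter fun w => r v w) ≤ 1)
    (hin : ∀ w, #(univ.filter fun v => r v w) ≤ 1)
    (hsub : ∀ S : Finset V, S.Nonempty →
      #(univ.filter fun p : V × V => p.1 ∈ S ∧ p.2 ∈ S ∧ r p.1 p.2) ≤ #S - 1)
    (hedges : #(univ.filter fun p : V × V => r p.1 p.2) = Fintype.card V - 1) :
    ChainConstraints r where
  out_unique v w w' h h' := card_le_one.mp (hout v) w (by simpa) w' (by simpa)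
  in_unique v v' w h h' := card_le_one.mp (hin w) v (by simpa) v' (by simpa)
  card_arcsOn_lt S hS := by
    have := hsub S hS
    rw [filter_mem_mem_rel_eq_arcsOn] at this
    have := hS.card_pos
    omega
  card_arcs := by
    rw [← hedges, ← filter_mem_mem_rel_eq_arcsOn]
    simp

theorem exists_source (hr : ChainConstraints r) (hV : 0 < Fintype.card V) :
    ∃ s, ∀ v, ¬ r v s :=
  exists_forall_not_rel_of_card_arcs_lt r (by rw [hr.card_arcs]; omega)

variable [DecidableEq V]

theorem exists_rel_of_source (hr : ChainConstraints r) (hV : 2 ≤ Fintype.card V) {s : V}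
    (hs : ∀ v, ¬ r v s) : ∃ t, r s t := by
  by_contra! hst
  have hsub : arcsOn r univ ⊆ arcsOn r (univ.erase s) := by
    rintro ⟨v, w⟩ hvw
    simp only [arcsOn, mem_filter, mem_product, mem_univ, mem_erase] at hvw ⊢
    grind
  have hne : (univ.erase s).Nonempty := by
    rw [← card_pos, card_erase_of_mem (mem_univ s), card_univ]
    omega
  have := (card_le_card hsub).trans_lt (hr.card_arcsOn_lt _ hne)
  rw [hr.card_arcs, card_erase_of_mem (mem_univ s), card_univ] at this
  omega

theorem card_arcsOn_erase_source (hr : ChainConstraints r) {s : V} (hs : ∀ v, ¬ r v s) :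
    #(arcsOn r (univ.erase s)) = Fintype.card V - 1 - 1 := by
  rcases le_or_gt 2 (Fintype.card V) with hV | hV
  · obtain ⟨t, hst⟩ := hr.exists_rel_of_source hV hs
    have := hr.card_arcs
    rw [arcsOn_univ_eq_insert r hs (fun w hw => hr.out_unique hw hst) hst,
      card_insert_of_notMem (by simp [arcsOn])] at this
    omega
  · have := card_le_card (arcsOn_mono r (subset_univ (univ.erase s)))
    rw [hr.card_arcs] at this
    omega

theorem restrict (hr : ChainConstraints r) {s : V} (hs : ∀ v, ¬ r v s) :
    ChainConstraints (fun a b : {v // v ≠ s} => r a b) where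
  out_unique _ _ _ h h' := Subtype.ext (hr.out_unique h h')
  in_unique _ _ _ h h' := Subtype.ext (hr.in_unique h h')
  card_arcsOn_lt S hS := by
    have := hr.card_arcsOn_lt _ (hS.map (f := .subtype (· ≠ s)))
    rwa [← card_arcsOn_comap, card_map] at this
  card_arcs := by
    have huniv : (univ : Finset {v // v ≠ s}).map (.subtype _) = univ.erase s := by
      ext
      simp
    have := card_arcsOn_comap r (.subtype (· ≠ s)) univ
    rw [huniv] at this
    refine this.trans ?_
    simpa using hr.card_arcsOn_erase_source hs

theorem rel_source_iff_eq_zero (hr : ChainConstraints r) {s : V} (hs : ∀ v, ¬ r v s) {m : ℕ}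
    (e : Fin m ≃ {v // v ≠ s}) (he : ∀ i j, r (e i) (e j) ↔ j.val = i.val + 1) (j : Fin m) :
    r s (e j) ↔ j.val = 0 := by
  have forward : ∀ j : Fin m, r s (e j) → j.val = 0 := by
    intro j hj
    by_contra h0
    have hprev := (he ⟨j.val - 1, by omega⟩ j).2 (by simp; omega)
    exact (e _).2 (hr.in_unique hprev hj)
  refine ⟨forward j, fun h0 => ?_⟩
  have hV : 2 ≤ Fintype.card V := by
    have := Fintype.card_congr e
    simp only [Fintype.card_fin, Fintype.card_subtype_compl, Fintype.card_unique] at this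
    have := j.pos
    omega
  obtain ⟨t, hst⟩ := hr.exists_rel_of_source hV hs
  have ht : t ≠ s := fun h => hs s (h ▸ hst)
  have := forward (e.symm ⟨t, ht⟩) (by simpa)
  rwa [show j = e.symm ⟨t, ht⟩ from Fin.ext (h0.trans this.symm), e.apply_symm_apply]

theorem exists_equiv_fin_rel_apply_iff (hr : ChainConstraints r) {n : ℕ}
    (hV : Fintype.card V = n) :
    ∃ e : Fin n ≃ V, ∀ i j, r (e i) (e j) ↔ j.val = i.val + 1 := by
  induction n generalizing V with
  | zero => exact ⟨(Fintype.equivFinOfCardEq hV).symm, fun i => i.elim0⟩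
  | succ m ih =>
    obtain ⟨s, hs⟩ := hr.exists_source (by omega)
    obtain ⟨e, he⟩ := ih (hr.restrict hs) (by simp [hV])
    exact ⟨consEquiv s e, consEquiv_rel_apply_iff hs e he (hr.rel_source_iff_eq_zero hs e he)⟩

end ChainConstraints

end

theorem chain_constraints_give_hamiltonian_path_general
    {V : Type*} [Fintype V] [DecidableEq V] (n : ℕ)
    (hcard : Fintype.card V = n) (y : V → V → Bool)
    (hout : ∀ v : V, (Finset.univ.filter (fun w => y v w = true)).card ≤ 1)
    (hin : ∀ w : V, (Finset.univ.filter (fun v => y v w = true)).card ≤ 1)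
    (hsub : ∀ V' : Finset V, V'.Nonempty →
      (Finset.univ.filter (fun p : V × V => p.1 ∈ V' ∧ p.2 ∈ V' ∧ y p.1 p.2 = true)).card
        ≤ V'.card - 1)
    (hedges : (Finset.univ.filter (fun p : V × V => y p.1 p.2 = true)).card = n - 1) :
    ∃ e : Fin n ≃ V, ∀ v w : V,
      y v w = true ↔ ∃ (i : Fin n) (h : i.val + 1 < n),
        e i = v ∧ e ⟨i.val + 1, h⟩ = w := by
  have hr := ChainConstraints.of_card_filter (r := fun v w => y v w = true)
    hout hin hsub (hcard ▸ hedges)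
  obtain ⟨e, he⟩ := hr.exists_equiv_fin_rel_apply_iff hcard
  exact ⟨e, rel_iff_exists_of_rel_apply_iff e he⟩

/-- Degree bounds, subtour-elimination and edge count n−1 force a Hamiltonian
directed path on V. -/
theorem chain_constraints_give_hamiltonian_path
    {V : Type*} [Fintype V] [DecidableEq V] (n : ℕ)
    (hn : 1 ≤ n) (hcard : Fintype.card V = n) (y : V → V → Bool)
    (hout : ∀ v : V, (Finset.univ.filter (fun w => y v w = true)).card ≤ 1)
    (hin : ∀ w : V, (Finset.univ.filter (fun v => y v w = true)).card ≤ 1)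
    (hsub : ∀ V' : Finset V, V'.Nonempty →
      (Finset.univ.filter (fun p : V × V => p.1 ∈ V' ∧ p.2 ∈ V' ∧ y p.1 p.2 = true)).card
        ≤ V'.card - 1)
    (hedges : (Finset.univ.filter (fun p : V × V => y p.1 p.2 = true)).card = n - 1) :
    ∃ e : Fin n ≃ V, ∀ v w : V,
      y v w = true ↔ ∃ (i : Fin n) (h : i.val + 1 < n),
        e i = v ∧ e ⟨i.val + 1, h⟩ = w :=
  chain_constraints_give_hamiltonian_path_general n hcard y hout hin hsub hedges
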